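/- Let ℓ be the logistic loss, f_W(x) differentiable in W with twice-differentiability, and y ∈ {−1,+1}. Then the Hessian of W ↦ ℓ(y f_W(x)) satisfies λ_min(∇² ℓ(y f_W(x))) ≥ −‖∇² f_W(x)‖₂ · ℓ(y f_W(x)) and λ_max(∇² ℓ(y f_W(x))) ≤ (1/4)‖∇ f_W(x)‖₂² + ‖∇² f_W(x)‖₂. -/

import Mathlib

/-- The logistic loss `ℓ(z) = log(1 + exp(-z))`. -/
noncomputable def logisticLoss (z : ℝ) : ℝ := Real.log (1 + Real.exp (-z))

noncomputable def logisticLoss' (z : ℝ) : ℝ := -(Real.exp (-z) / (1 + Real.exp (-z)))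

noncomputable def logisticLoss'' (z : ℝ) : ℝ := Real.exp (-z) / (1 + Real.exp (-z)) ^ 2

lemma one_add_exp_pos (z : ℝ) : 0 < 1 + Real.exp (-z) := by positivity

lemma hasDerivAt_logisticLoss (z : ℝ) : HasDerivAt logisticLoss (logisticLoss' z) z := by
  have h1 : HasDerivAt (fun z : ℝ => 1 + Real.exp (-z)) (-Real.exp (-z)) z := by
    simpa using ((Real.hasDerivAt_exp (-z)).comp z ((hasDerivAt_id z).neg)).const_add 1
  have := h1.log (one_add_exp_pos z).ne'
  exact (by simpa [logisticLoss', neg_div] using this : HasDerivAt (fun y => Real.log (1 + Real.exp (-y))) (logisticLoss' z) z)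

lemma hasDerivAt_logisticLoss' (z : ℝ) : HasDerivAt logisticLoss' (logisticLoss'' z) z := by
  have he : HasDerivAt (fun z : ℝ => Real.exp (-z)) (-Real.exp (-z)) z := by
    simpa [Function.comp_def] using ((Real.hasDerivAt_exp (-z)).comp z ((hasDerivAt_id z).neg))
  have h1 : HasDerivAt (fun z : ℝ => 1 + Real.exp (-z)) (-Real.exp (-z)) z := he.const_add 1
  have hd := (he.div h1 (one_add_exp_pos z).ne').neg
  refine hd.congr_deriv (Eq.symm ?_)
  have h := (one_add_exp_pos z).ne'
  rw [logisticLoss'']; field_simp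
  ring

lemma logisticLoss''_nonneg (z : ℝ) : 0 ≤ logisticLoss'' z := by
  unfold logisticLoss''; positivity

lemma logisticLoss''_le (z : ℝ) : logisticLoss'' z ≤ 1 / 4 := by
  unfold logisticLoss''
  rw [div_le_div_iff₀ (by positivity) (by norm_num)]
  nlinarith [sq_nonneg (1 - Real.exp (-z)), Real.exp_pos (-z)]

lemma abs_logisticLoss'_le_one (z : ℝ) : |logisticLoss' z| ≤ 1 := by
  unfold logisticLoss'
  rw [abs_neg, abs_of_nonneg (by positivity)]
  rw [div_le_one (one_add_exp_pos z)]
  linarith [Real.exp_pos (-z)]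

lemma abs_logisticLoss'_le_loss (z : ℝ) : |logisticLoss' z| ≤ logisticLoss z := by
  unfold logisticLoss' logisticLoss
  rw [abs_neg, abs_of_nonneg (by positivity)]
  set u := Real.exp (-z) with hu
  have hupos : 0 < u := Real.exp_pos _
  -- u / (1 + u) ≤ log (1 + u), since exp (u/(1+u)) ≤ 1 + u
  have key : Real.exp (u / (1 + u)) ≤ 1 + u := by
    have h := Real.add_one_le_exp (-(u / (1 + u)))
    have h1 : (0:ℝ) < 1 + u := by linarith
    have h2 : -(u / (1 + u)) + 1 = 1 / (1 + u) := by field_simp; ring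
    rw [h2] at h
    have h3 : 0 < Real.exp (-(u / (1 + u))) := Real.exp_pos _
    rw [Real.exp_neg] at h
    have h4 : Real.exp (u / (1 + u)) * (1 / (1 + u))
        ≤ Real.exp (u / (1 + u)) * (Real.exp (u / (1 + u)))⁻¹ :=
      mul_le_mul_of_nonneg_left h (Real.exp_pos _).le
    rw [mul_inv_cancel₀ (Real.exp_pos _).ne'] at h4
    rw [mul_one_div, div_le_one h1] at h4
    exact h4
  calc u / (1 + u) = Real.log (Real.exp (u / (1 + u))) := (Real.log_exp _).symm
    _ ≤ Real.log (1 + u) := Real.log_le_log (Real.exp_pos _) key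

/-- Extreme-eigenvalue bounds for the Hessian of the logistic loss of a model output:
for `y ∈ {−1, +1}` the quadratic form of `∇²_W ℓ(y f_W(x))` satisfies
`-‖∇²f_W(x)‖ ℓ(y f_W(x)) ‖v‖² ≤ v ∇²ℓ v ≤ ((1/4)‖∇f_W(x)‖² + ‖∇²f_W(x)‖) ‖v‖²`.
Here the input `x` is fixed and `f = f_·(x)` maps the parameter to the output. -/
theorem logistic_loss_hessian_eigenvalue_bounds {p : ℕ}
    (f : EuclideanSpace ℝ (Fin p) → ℝ) (hf : ContDiff ℝ 2 f)
    (y : ℝ) (hy : y = 1 ∨ y = -1) (W v : EuclideanSpace ℝ (Fin p)) :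
    (-(‖iteratedFDeriv ℝ 2 f W‖ * logisticLoss (y * f W)) * ‖v‖ ^ 2
        ≤ iteratedFDeriv ℝ 2 (fun W' => logisticLoss (y * f W')) W ![v, v]) ∧
    (iteratedFDeriv ℝ 2 (fun W' => logisticLoss (y * f W')) W ![v, v]
        ≤ ((1 / 4) * ‖gradient f W‖ ^ 2 + ‖iteratedFDeriv ℝ 2 f W‖) * ‖v‖ ^ 2) := by
  have hy2 : y * y = 1 := by rcases hy with h | h <;> simp [h]
  have hdf : Differentiable ℝ f := hf.differentiable (by norm_num)
  -- the model scaled by the label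
  have hh : ∀ w : EuclideanSpace ℝ (Fin p), HasFDerivAt (fun w' => y * f w') (y • fderiv ℝ f w) w := by
    intro w
    exact ((hdf w).hasFDerivAt).const_smul y
  -- first derivative of the composed loss, at every point
  have hF1 : ∀ w : EuclideanSpace ℝ (Fin p), HasFDerivAt (fun W' => logisticLoss (y * f W'))
      ((logisticLoss' (y * f w) * y) • fderiv ℝ f w) w := by
    intro w
    have := (hasDerivAt_logisticLoss (y * f w)).comp_hasFDerivAt w (hh w)
    simpa [Function.comp_def, smul_smul] using this
  set z := y * f W with hz
  set D2 := fderiv ℝ (fderiv ℝ f) W with hD2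
  -- differentiability of the first derivative of f
  have hfd : HasFDerivAt (fderiv ℝ f) D2 W := by
    have : DifferentiableAt ℝ (fderiv ℝ f) W := by
      have h := (hf.fderiv_right (m := 1) (by norm_num)).differentiable (by norm_num)
      exact h W
    exact this.hasFDerivAt
  -- derivative of the scalar coefficient
  have hc : HasFDerivAt (fun w => logisticLoss' (y * f w) * y)
      (logisticLoss'' z • fderiv ℝ f W) W := by
    have h1 : HasFDerivAt (fun w => logisticLoss' (y * f w))
        ((logisticLoss'' z * y) • fderiv ℝ f W) W := by
      have := (hasDerivAt_logisticLoss' z).comp_hasFDerivAt W (hh W)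
      simpa [Function.comp_def, smul_smul, hz] using this
    have h2 := h1.mul_const y
    refine h2.congr_fderiv (Eq.symm ?_)
    ext w
    simp only [ContinuousLinearMap.coe_smul', Pi.smul_apply, smul_eq_mul]
    linear_combination (-(logisticLoss'' z * (fderiv ℝ f W) w)) * hy2
  -- second derivative of the composed loss
  have hF2 : HasFDerivAt (fun w => (logisticLoss' (y * f w) * y) • fderiv ℝ f w)
      ((logisticLoss' z * y) • D2
        + (logisticLoss'' z • fderiv ℝ f W).smulRight (fderiv ℝ f W)) W :=
    hc.smul hfd
  have hF2' : HasFDerivAt (fderiv ℝ (fun W' => logisticLoss (y * f W')))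
      ((logisticLoss' z * y) • D2
        + (logisticLoss'' z • fderiv ℝ f W).smulRight (fderiv ℝ f W)) W := by
    have heq : (fderiv ℝ (fun W' => logisticLoss (y * f W')))
        = fun w => (logisticLoss' (y * f w) * y) • fderiv ℝ f w := by
      funext w; exact (hF1 w).fderiv
    rw [heq]; exact hF2
  set a := fderiv ℝ f W v with ha
  set b := iteratedFDeriv ℝ 2 f W ![v, v] with hb
  have hbval : D2 v v = b := by
    rw [hb, iteratedFDeriv_two_apply]
    simp [hD2]
  have hval : iteratedFDeriv ℝ 2 (fun W' => logisticLoss (y * f W')) W ![v, v]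
      = logisticLoss'' z * a ^ 2 + (logisticLoss' z * y) * b := by
    rw [iteratedFDeriv_two_apply, hF2'.fderiv]
    simp only [Matrix.cons_val_zero, Matrix.cons_val_one, Matrix.head_cons,
      ContinuousLinearMap.add_apply, ContinuousLinearMap.coe_smul', Pi.smul_apply,
      ContinuousLinearMap.smulRight_apply, ContinuousLinearMap.smul_apply]
    rw [hbval]
    simp [← ha, smul_eq_mul]
    ring
  -- norm bounds
  have hgrad : ‖gradient f W‖ = ‖fderiv ℝ f W‖ := by
    rw [gradient]
    exact LinearIsometryEquiv.norm_map _ _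
  have hA : |a| ≤ ‖gradient f W‖ * ‖v‖ := by
    rw [hgrad, ha]
    calc |fderiv ℝ f W v| = ‖fderiv ℝ f W v‖ := rfl
      _ ≤ ‖fderiv ℝ f W‖ * ‖v‖ := (fderiv ℝ f W).le_opNorm v
  have hB : |b| ≤ ‖iteratedFDeriv ℝ 2 f W‖ * ‖v‖ ^ 2 := by
    rw [hb]
    calc |iteratedFDeriv ℝ 2 f W ![v, v]| = ‖iteratedFDeriv ℝ 2 f W ![v, v]‖ := rfl
      _ ≤ ‖iteratedFDeriv ℝ 2 f W‖ * ∏ i : Fin 2, ‖(![v, v]) i‖ :=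
          (iteratedFDeriv ℝ 2 f W).le_opNorm _
      _ = ‖iteratedFDeriv ℝ 2 f W‖ * ‖v‖ ^ 2 := by
          rw [Fin.prod_univ_two]; simp [sq]
  have hL'z := abs_logisticLoss'_le_loss z
  have hL'1 := abs_logisticLoss'_le_one z
  have hL''0 := logisticLoss''_nonneg z
  have hL''4 := logisticLoss''_le z
  have habsy : |y| = 1 := by rcases hy with h | h <;> simp [h]
  have hloss0 : 0 ≤ logisticLoss z := by
    unfold logisticLoss
    have : (1:ℝ) ≤ 1 + Real.exp (-z) := by linarith [Real.exp_pos (-z)]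
    exact Real.log_nonneg this
  have hterm : |(logisticLoss' z * y) * b| ≤ logisticLoss z * (‖iteratedFDeriv ℝ 2 f W‖ * ‖v‖ ^ 2) := by
    rw [abs_mul, abs_mul, habsy, mul_one]
    exact mul_le_mul hL'z hB (abs_nonneg _) hloss0
  have hterm1 : |(logisticLoss' z * y) * b| ≤ ‖iteratedFDeriv ℝ 2 f W‖ * ‖v‖ ^ 2 := by
    rw [abs_mul, abs_mul, habsy, mul_one]
    calc |logisticLoss' z| * |b| ≤ 1 * (‖iteratedFDeriv ℝ 2 f W‖ * ‖v‖ ^ 2) :=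
        mul_le_mul hL'1 hB (abs_nonneg _) (by norm_num)
      _ = _ := by ring
  have ha2 : a ^ 2 ≤ ‖gradient f W‖ ^ 2 * ‖v‖ ^ 2 := by
    have := sq_le_sq' (neg_abs_le a) (le_abs_self a)
    calc a ^ 2 ≤ |a| ^ 2 := by rw [sq_abs]
      _ ≤ (‖gradient f W‖ * ‖v‖) ^ 2 := by
          apply pow_le_pow_left₀ (abs_nonneg _) hA
      _ = ‖gradient f W‖ ^ 2 * ‖v‖ ^ 2 := by ring
  constructor
  · rw [hval]
    have h1 : 0 ≤ logisticLoss'' z * a ^ 2 := by positivity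
    have h2 : -(logisticLoss z * (‖iteratedFDeriv ℝ 2 f W‖ * ‖v‖ ^ 2)) ≤ (logisticLoss' z * y) * b := by
      have := neg_abs_le ((logisticLoss' z * y) * b)
      linarith [hterm]
    have h3 : -(‖iteratedFDeriv ℝ 2 f W‖ * logisticLoss (y * f W)) * ‖v‖ ^ 2
        = -(logisticLoss z * (‖iteratedFDeriv ℝ 2 f W‖ * ‖v‖ ^ 2)) := by rw [hz]; ring
    rw [h3]
    linarith
  · rw [hval]
    have h1 : logisticLoss'' z * a ^ 2 ≤ (1 / 4) * (‖gradient f W‖ ^ 2 * ‖v‖ ^ 2) := by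
      have hsq : (0:ℝ) ≤ a ^ 2 := sq_nonneg a
      calc logisticLoss'' z * a ^ 2 ≤ (1 / 4) * a ^ 2 :=
            mul_le_mul_of_nonneg_right hL''4 hsq
        _ ≤ (1 / 4) * (‖gradient f W‖ ^ 2 * ‖v‖ ^ 2) := by linarith [ha2]
    have h2 : (logisticLoss' z * y) * b ≤ ‖iteratedFDeriv ℝ 2 f W‖ * ‖v‖ ^ 2 :=
      le_trans (le_abs_self _) hterm1
    have h3 : ((1 / 4) * ‖gradient f W‖ ^ 2 + ‖iteratedFDeriv ℝ 2 f W‖) * ‖v‖ ^ 2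
        = (1 / 4) * (‖gradient f W‖ ^ 2 * ‖v‖ ^ 2) + ‖iteratedFDeriv ℝ 2 f W‖ * ‖v‖ ^ 2 := by ring
    rw [h3]
    linarith
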